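/- arXiv:2504.12146 — 6 statements merged into one kernel-verified Lean document; each statement's English description precedes it below -/
import Mathlib

section
/- The number of dominant monomial ideals in K[x,y] whose minimal generators have least common multiple exactly x^{m_1} y^{m_2} (with m_1, m_2 ≥ 1) is 1 + m_1·m_2. -/
def DominantSet {n : ℕ} (L : Finset (Fin n → ℕ)) : Prop :=
  ∀ v ∈ L, ∃ i : Fin n, ∀ w ∈ L, w ≠ v → w i < v i

def mLcm {n : ℕ} (L : Finset (Fin n → ℕ)) : Fin n → ℕ :=
  fun i => L.sup fun g => g i

lemma vec2_eq {a b c d : ℕ} : (![a,b] : Fin 2 → ℕ) = ![c,d] ↔ a = c ∧ b = d := by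
  constructor
  · intro h
    exact ⟨by simpa using congrFun h 0, by simpa using congrFun h 1⟩
  · rintro ⟨rfl, rfl⟩; rfl

lemma vec2_eta (v : Fin 2 → ℕ) : v = ![v 0, v 1] := by
  funext i; fin_cases i <;> simp

lemma dominant_three {L : Finset (Fin 2 → ℕ)} (hD : DominantSet L)
    {u v w : Fin 2 → ℕ} (hu : u ∈ L) (hv : v ∈ L) (hw : w ∈ L)
    (huv : u ≠ v) (huw : u ≠ w) (hvw : v ≠ w) : False := by
  obtain ⟨a, ha⟩ := hD u hu
  obtain ⟨b, hb⟩ := hD v hv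
  obtain ⟨c, hc⟩ := hD w hw
  have hab : a = b ∨ b = c ∨ a = c := by fin_cases a <;> fin_cases b <;> fin_cases c <;> simp
  rcases hab with h | h | h
  · subst h
    have h1 := ha v hv huv.symm
    have h2 := hb u hu huv
    omega
  · subst h
    have h1 := hb w hw hvw.symm
    have h2 := hc v hv hvw
    omega
  · subst h
    have h1 := ha w hw huw.symm
    have h2 := hc u hu huw
    omega

/-- Monomial ideals in `K[x,y]` are identified with their minimal monomial generating sets,
i.e. finite antichains of exponent vectors.  The number of dominant monomial ideals in
`K[x,y]` whose minimal generators have lcm exactly `x^m₁ y^m₂` (with `m₁, m₂ ≥ 1`) is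
`1 + m₁ * m₂`. -/
theorem count_dominant_two_vars (m₁ m₂ : ℕ) (h₁ : 1 ≤ m₁) (h₂ : 1 ≤ m₂) :
    Set.ncard {L : Finset (Fin 2 → ℕ) |
      (∀ u ∈ L, ∀ v ∈ L, u ≤ v → u = v) ∧ DominantSet L ∧ mLcm L = ![m₁, m₂]} =
      1 + m₁ * m₂ := by
  classical
  set f : ℕ × ℕ → Finset (Fin 2 → ℕ) := fun p => {![m₁, p.2], ![p.1, m₂]} with hf
  set T : Finset (Finset (Fin 2 → ℕ)) :=
    insert {![m₁, m₂]} ((Finset.range m₁ ×ˢ Finset.range m₂).image f) with hT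
  have hmemT : ∀ L, L ∈ T ↔
      (L = {![m₁, m₂]} ∨ ∃ a b, a < m₁ ∧ b < m₂ ∧ f (a, b) = L) := by
    intro L
    simp only [hT, Finset.mem_insert, Finset.mem_image, Finset.mem_product,
      Finset.mem_range, Prod.exists]
    constructor
    · rintro (h | ⟨a, b, ⟨ha, hb⟩, h⟩)
      · exact Or.inl h
      · exact Or.inr ⟨a, b, ha, hb, h⟩
    · rintro (h | ⟨a, b, ha, hb, h⟩)
      · exact Or.inl h
      · exact Or.inr ⟨a, b, ⟨ha, hb⟩, h⟩
  have hset : {L : Finset (Fin 2 → ℕ) |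
      (∀ u ∈ L, ∀ v ∈ L, u ≤ v → u = v) ∧ DominantSet L ∧ mLcm L = ![m₁, m₂]} = ↑T := by
    ext L
    simp only [Set.mem_setOf_eq, Finset.mem_coe, hmemT L]
    constructor
    · rintro ⟨hA, hD, hM⟩
      have hM0 : mLcm L 0 = m₁ := by rw [hM]; simp
      have hM1 : mLcm L 1 = m₂ := by rw [hM]; simp
      have hne : L.Nonempty := by
        rcases Finset.eq_empty_or_nonempty L with h | h
        · exfalso
          rw [h] at hM0
          simp [mLcm] at hM0
          omega
        · exact h
      obtain ⟨u, hu⟩ := hne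
      by_cases hall : ∀ w ∈ L, w = u
      · -- singleton case
        have hLs : L = {u} := by
          apply Finset.eq_singleton_iff_unique_mem.mpr
          exact ⟨hu, hall⟩
        left
        rw [hLs]
        congr 1
        rw [hLs] at hM
        have : mLcm ({u} : Finset (Fin 2 → ℕ)) = u := by
          funext i; simp [mLcm]
        rw [this] at hM
        exact hM
      · push_neg at hall
        obtain ⟨v, hv, hvu⟩ := hall
        have hLp : L = {u, v} := by
          apply Finset.Subset.antisymm
          · intro w hw
            simp only [Finset.mem_insert, Finset.mem_singleton]
            by_contra hc
            push_neg at hc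
            exact dominant_three hD hu hv hw (Ne.symm hvu) (Ne.symm hc.1) (Ne.symm hc.2)
          · intro w hw
            simp only [Finset.mem_insert, Finset.mem_singleton] at hw
            rcases hw with rfl | rfl
            · exact hu
            · exact hv
        have hMuv0 : u 0 ⊔ v 0 = m₁ := by
          rw [hLp] at hM0
          simpa [mLcm] using hM0
        have hMuv1 : u 1 ⊔ v 1 = m₂ := by
          rw [hLp] at hM1
          simpa [mLcm] using hM1
        obtain ⟨i, hi⟩ := hD u hu
        obtain ⟨j, hj⟩ := hD v hv
        have hvltu : v i < u i := hi v hv hvu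
        have hultv : u j < v j := hj u hu (Ne.symm hvu)
        have hij : i ≠ j := by
          rintro rfl; omega
        right
        have hcases : (i = 0 ∧ j = 1) ∨ (i = 1 ∧ j = 0) := by
          fin_cases i <;> fin_cases j <;> simp_all
        rcases hcases with ⟨rfl, rfl⟩ | ⟨rfl, rfl⟩
        · -- u is max in coord 0, v in coord 1
          have hu0 : u 0 = m₁ := by omega
          have hv1 : v 1 = m₂ := by omega
          refine ⟨v 0, u 1, by omega, by omega, ?_⟩
          rw [hLp, hf]
          simp only
          rw [show (![m₁, u 1] : Fin 2 → ℕ) = u by rw [← hu0]; exact (vec2_eta u).symm,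
            show (![v 0, m₂] : Fin 2 → ℕ) = v by rw [← hv1]; exact (vec2_eta v).symm]
        · -- v is max in coord 0, u in coord 1
          have hv0 : v 0 = m₁ := by omega
          have hu1 : u 1 = m₂ := by omega
          refine ⟨u 0, v 1, by omega, by omega, ?_⟩
          rw [hLp, hf]
          simp only
          rw [show (![m₁, v 1] : Fin 2 → ℕ) = v by rw [← hv0]; exact (vec2_eta v).symm,
            show (![u 0, m₂] : Fin 2 → ℕ) = u by rw [← hu1]; exact (vec2_eta u).symm]
          exact Finset.pair_comm v u
    · rintro (rfl | ⟨a, b, ha, hb, rfl⟩)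
      · refine ⟨?_, ?_, ?_⟩
        · intro x hx y hy _
          simp only [Finset.mem_singleton] at hx hy
          rw [hx, hy]
        · intro x hx
          refine ⟨0, ?_⟩
          intro w hw hne
          simp only [Finset.mem_singleton] at hx hw
          exact absurd (hw.trans hx.symm) hne
        · funext i; simp [mLcm]
      · have hmem : ∀ x, x ∈ f (a, b) ↔ x = ![m₁, b] ∨ x = ![a, m₂] := by
          intro x
          simp [hf]
        refine ⟨?_, ?_, ?_⟩
        · intro x hx y hy hle
          rw [hmem] at hx hy
          rcases hx with rfl | rfl <;> rcases hy with rfl | rfl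
          · rfl
          · exfalso
            have := hle 0
            simp at this
            omega
          · exfalso
            have := hle 1
            simp at this
            omega
          · rfl
        · intro x hx
          rw [hmem] at hx
          rcases hx with rfl | rfl
          · refine ⟨0, ?_⟩
            intro w hw hne
            rw [hmem] at hw
            rcases hw with rfl | rfl
            · exact absurd rfl hne
            · simp; omega
          · refine ⟨1, ?_⟩
            intro w hw hne
            rw [hmem] at hw
            rcases hw with rfl | rfl
            · simp; omega
            · exact absurd rfl hne
        · funext i
          fin_cases i <;>
            simp [mLcm, hf, Finset.sup_insert, Finset.sup_singleton] <;> omega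
  rw [hset, Set.ncard_coe_finset, hT]
  have hnotmem : ({![m₁, m₂]} : Finset (Fin 2 → ℕ)) ∉
      (Finset.range m₁ ×ˢ Finset.range m₂).image f := by
    intro hmem
    simp only [Finset.mem_image, Finset.mem_product, Finset.mem_range, Prod.exists] at hmem
    obtain ⟨a, b, ⟨ha, hb⟩, heq⟩ := hmem
    have : (![a, m₂] : Fin 2 → ℕ) ∈ ({![m₁, m₂]} : Finset (Fin 2 → ℕ)) := by
      rw [← heq]; simp [hf]
    rw [Finset.mem_singleton, vec2_eq] at this
    omega
  rw [Finset.card_insert_of_notMem hnotmem]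
  have hinj : Set.InjOn f ↑(Finset.range m₁ ×ˢ Finset.range m₂) := by
    rintro ⟨a, b⟩ hp ⟨c, d⟩ hq heq
    simp only [Finset.mem_coe, Finset.mem_product, Finset.mem_range] at hp hq
    have h1 : (![a, m₂] : Fin 2 → ℕ) ∈ f (c, d) := by
      rw [← heq]; simp [hf]
    have h2 : (![m₁, b] : Fin 2 → ℕ) ∈ f (c, d) := by
      rw [← heq]; simp [hf]
    simp only [hf, Finset.mem_insert, Finset.mem_singleton, vec2_eq] at h1 h2
    have hac : a = c := by rcases h1 with ⟨h, _⟩ | ⟨h, _⟩ <;> omega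
    have hbd : b = d := by rcases h2 with ⟨_, h⟩ | ⟨h, _⟩ <;> omega
    simp [hac, hbd]
  rw [Finset.card_image_of_injOn hinj, Finset.card_product, Finset.card_range,
    Finset.card_range]
  omega
end

section
/- The number of dominant monomial ideals in K[x,y,z] whose minimal generators have lcm x^{m_1} y^{m_2} z^{m_3} (with m_1,m_2,m_3 ≥ 1) is 1 + m_1^2 m_2^2 m_3^2 + m_1 m_2 + m_1 m_3 + m_2 m_3 + 3 m_1 m_2 m_3. -/
/-! Let `L` be dominant with lcm `m`. Every `v ∈ L` lies below `m`, and its level, the set of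
coordinates where `v` reaches `m`, contains the coordinate in which `v` dominates, which lies in
no other level. So the levels of `L` are distinct and cover the coordinates by sets each having a
private point, and `L` is recovered from this cover together with, for each level `S`, the
coordinates off `S` of the vector at level `S`, which range freely below `m`. Conversely every
such choice gives a dominant set with lcm `m`. Hence the count is
`∑_𝒮 ∏_{S ∈ 𝒮} ∏_{t ∉ S} m_t` over such covers `𝒮`. In three variables there are eight of them:
`{xyz}`, the three `{xy, xz}`, the three `{x, yz}` and `{x, y, z}`, contributing `1`, `m_i m_j`,
`m₁m₂m₃` and `(m₁m₂m₃)²`. -/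

open Finset

variable {n : ℕ} {L : Finset (Fin n → ℕ)}

theorem DominantSet.eq_of_le (hL : DominantSet L) {u v : Fin n → ℕ} (hu : u ∈ L) (hv : v ∈ L)
    (huv : u ≤ v) : u = v := by
  by_contra hne
  obtain ⟨i, hi⟩ := hL u hu
  exact (hi v hv (Ne.symm hne)).not_ge (huv i)

theorem le_mLcm {v : Fin n → ℕ} (hv : v ∈ L) : v ≤ mLcm L :=
  fun i => le_sup (f := fun g => g i) hv

theorem mLcm_apply_eq_of_forall_le {v : Fin n → ℕ} (hv : v ∈ L) {i : Fin n}
    (h : ∀ w ∈ L, w i ≤ v i) : mLcm L i = v i :=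
  le_antisymm (Finset.sup_le h) (le_mLcm hv i)

namespace DominantCount

def level (m v : Fin n → ℕ) : Finset (Fin n) := {t | v t = m t}

theorem mem_level {m v : Fin n → ℕ} {t : Fin n} : t ∈ level m v ↔ v t = m t := by
  simp [level]

def IsPrivateCover (𝒮 : Finset (Finset (Fin n))) : Prop :=
  (∀ S ∈ 𝒮, ∃ i ∈ S, ∀ T ∈ 𝒮, i ∈ T → T = S) ∧ ∀ t, ∃ S ∈ 𝒮, t ∈ S

instance : DecidablePred (IsPrivateCover (n := n)) := fun _ => by
  unfold IsPrivateCover; infer_instance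

theorem _root_.DominantSet.exists_private_mem_level (hL : DominantSet L) {v : Fin n → ℕ}
    (hv : v ∈ L) : ∃ i ∈ level (mLcm L) v, ∀ w ∈ L, i ∈ level (mLcm L) w → w = v := by
  obtain ⟨i, hi⟩ := hL v hv
  have hvi : mLcm L i = v i := mLcm_apply_eq_of_forall_le hv fun w hw =>
    if h : w = v then h ▸ le_rfl else (hi w hw h).le
  refine ⟨i, mem_level.2 hvi.symm, fun w hw hwi => ?_⟩
  by_contra hne
  exact (hi w hw hne).ne ((mem_level.1 hwi).trans hvi)

theorem exists_mem_level_mLcm {t : Fin n} (ht : mLcm L t ≠ 0) :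
    ∃ v ∈ L, t ∈ level (mLcm L) v := by
  have hL : L.Nonempty := nonempty_iff_ne_empty.2 fun h => ht (by simp [h, mLcm])
  obtain ⟨v, hv, hvt⟩ := exists_mem_eq_sup L hL fun g => g t
  exact ⟨v, hv, mem_level.2 hvt.symm⟩

variable {m : Fin n → ℕ}

theorem dominantSet_and_mLcm_eq_iff (hm : ∀ t, m t ≠ 0) :
    DominantSet L ∧ mLcm L = m ↔
      (∀ v ∈ L, v ≤ m) ∧ Set.InjOn (level m) L ∧ IsPrivateCover (L.image (level m)) := by
  constructor
  · rintro ⟨hL, rfl⟩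
    refine ⟨fun v => le_mLcm, fun v hv w hw hvw => ?_, forall_mem_image.2 fun v hv => ?_,
      fun t => ?_⟩
    · obtain ⟨i, hiv, hi⟩ := hL.exists_private_mem_level hv
      exact (hi w hw (hvw ▸ hiv)).symm
    · obtain ⟨i, hiv, hi⟩ := hL.exists_private_mem_level hv
      exact ⟨i, hiv, forall_mem_image.2 fun w hw hwi => by rw [hi w hw hwi]⟩
    · obtain ⟨v, hv, htv⟩ := exists_mem_level_mLcm (hm t)
      exact ⟨_, mem_image_of_mem _ hv, htv⟩
  · rintro ⟨hle, hinj, hpriv, hcover⟩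
    constructor
    · intro v hv
      obtain ⟨i, hi, huniq⟩ := hpriv _ (mem_image_of_mem _ hv)
      refine ⟨i, fun w hw hne => (hle w hw i).trans_eq (mem_level.1 hi).symm |>.lt_of_ne ?_⟩
      exact fun hwi => hne <| hinj hw hv <|
        huniq _ (mem_image_of_mem _ hw) (mem_level.2 (hwi.trans (mem_level.1 hi)))
    · funext t
      obtain ⟨S, hS, htS⟩ := hcover t
      obtain ⟨v, hv, rfl⟩ := mem_image.1 hS
      exact le_antisymm (Finset.sup_le fun w hw => hle w hw t)
        ((mem_level.1 htS).symm.trans_le (le_mLcm hv t))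

def box (m : Fin n → ℕ) (S : Finset (Fin n)) : Finset (Fin n → ℕ) :=
  Fintype.piFinset fun t => if t ∈ S then {m t} else range (m t)

theorem mem_box {S : Finset (Fin n)} {v : Fin n → ℕ} : v ∈ box m S ↔ v ≤ m ∧ level m v = S := by
  have key : ∀ t, v t ∈ (if t ∈ S then {m t} else range (m t)) ↔
      v t ≤ m t ∧ (t ∈ S ↔ v t = m t) := by
    intro t
    by_cases ht : t ∈ S <;>
      simp only [ht, reduceIte, mem_singleton, mem_range, true_iff, false_iff, iff_and_self] <;>
      omega
  simp only [box, Fintype.mem_piFinset, key, forall_and, Finset.ext_iff, mem_level, Pi.le_def,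
    iff_comm]

theorem card_box (S : Finset (Fin n)) : #(box m S) = ∏ t, if t ∈ S then 1 else m t := by
  simp only [box, Fintype.card_piFinset, apply_ite card, card_singleton, card_range]

def levelFiber (m : Fin n → ℕ) (𝒮 : Finset (Finset (Fin n))) : Set (Finset (Fin n → ℕ)) :=
  {L | (∀ v ∈ L, v ≤ m) ∧ Set.InjOn (level m) L ∧ L.image (level m) = 𝒮}

/-- Off `𝒮` a section is `0`, so that the sections form a plain `Fintype.piFinset`. -/
def sections (m : Fin n → ℕ) (𝒮 : Finset (Finset (Fin n))) :
    Finset (Finset (Fin n) → Fin n → ℕ) :=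
  Fintype.piFinset fun S => if S ∈ 𝒮 then box m S else {0}

variable {𝒮 : Finset (Finset (Fin n))}

theorem mem_sections {f : Finset (Fin n) → Fin n → ℕ} :
    f ∈ sections m 𝒮 ↔ (∀ S ∈ 𝒮, f S ≤ m ∧ level m (f S) = S) ∧ ∀ S ∉ 𝒮, f S = 0 := by
  simp only [sections, Fintype.mem_piFinset, ← mem_box]
  refine ⟨fun h => ⟨fun S hS => ?_, fun S hS => ?_⟩, fun ⟨h₁, h₂⟩ S => ?_⟩
  · simpa [hS] using h S
  · simpa [hS] using h S
  · by_cases hS : S ∈ 𝒮 <;> simp [hS, h₁, h₂]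

theorem injOn_image_sections :
    Set.InjOn (fun f : Finset (Fin n) → Fin n → ℕ => 𝒮.image f) (sections m 𝒮) := by
  intro f hf g hg (hfg : 𝒮.image f = 𝒮.image g)
  obtain ⟨hf, hf₀⟩ := mem_sections.1 hf
  obtain ⟨hg, hg₀⟩ := mem_sections.1 hg
  funext S
  by_cases hS : S ∈ 𝒮
  · obtain ⟨S', hS', hgf⟩ := mem_image.1 (hfg ▸ mem_image_of_mem f hS)
    obtain rfl : S' = S := (hg S' hS').2.symm.trans (hgf ▸ (hf S hS).2)
    exact hgf.symm
  · rw [hf₀ S hS, hg₀ S hS]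

theorem image_mem_levelFiber {f : Finset (Fin n) → Fin n → ℕ} (hf : f ∈ sections m 𝒮) :
    𝒮.image f ∈ levelFiber m 𝒮 := by
  obtain ⟨hf, -⟩ := mem_sections.1 hf
  refine ⟨forall_mem_image.2 fun S hS => (hf S hS).1, ?_, ?_⟩
  · rintro _ hv _ hw hvw
    obtain ⟨S, hS, rfl⟩ := mem_image.1 (mem_coe.1 hv)
    obtain ⟨T, hT, rfl⟩ := mem_image.1 (mem_coe.1 hw)
    rw [(hf S hS).2, (hf T hT).2] at hvw
    rw [hvw]
  · rw [image_image]
    exact (image_congr fun S hS => (hf S hS).2).trans image_id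

theorem levelFiber_eq_image_sections :
    levelFiber m 𝒮 = ((sections m 𝒮).image fun f => 𝒮.image f : Set _) := by
  ext L
  simp only [coe_image, Set.mem_image, mem_coe]
  refine ⟨?_, fun ⟨f, hf, hL⟩ => hL ▸ image_mem_levelFiber hf⟩
  rintro ⟨hle, hinj, rfl⟩
  choose! g hgL hglev using fun S (hS : S ∈ L.image (level m)) => mem_image.1 hS
  refine ⟨fun S => if S ∈ L.image (level m) then g S else 0, mem_sections.2 ⟨?_, ?_⟩, ?_⟩
  · intro S hS
    simpa [hS, hglev S hS] using hle _ (hgL S hS)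
  · intro S hS
    simp [hS]
  · ext v
    constructor
    · intro hv
      obtain ⟨S, hS, rfl⟩ := mem_image.1 hv
      rw [if_pos hS]
      exact hgL S hS
    · intro hv
      have hS := mem_image_of_mem (level m) hv
      exact mem_image.2 ⟨_, hS, by rw [if_pos hS]; exact hinj (hgL _ hS) hv (hglev _ hS)⟩

theorem ncard_levelFiber :
    (levelFiber m 𝒮).ncard = ∏ S ∈ 𝒮, ∏ t, if t ∈ S then 1 else m t := by
  rw [levelFiber_eq_image_sections, Set.ncard_coe_finset,
    card_image_of_injOn injOn_image_sections, sections, Fintype.card_piFinset]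
  simp only [apply_ite card, card_singleton, card_box]
  rw [prod_ite_mem, univ_inter]

theorem ncard_setOf_dominantSet_and_mLcm_eq (hm : ∀ t, m t ≠ 0) :
    {L : Finset (Fin n → ℕ) | DominantSet L ∧ mLcm L = m}.ncard =
      ∑ 𝒮 with IsPrivateCover 𝒮, ∏ S ∈ 𝒮, ∏ t, if t ∈ S then 1 else m t := by
  have hunion : {L | DominantSet L ∧ mLcm L = m} =
      ⋃ 𝒮 ∈ {𝒮 | IsPrivateCover 𝒮}, levelFiber m 𝒮 := by
    ext L
    simp only [Set.mem_ofPred_eq, Set.mem_iUnion, dominantSet_and_mLcm_eq_iff hm, levelFiber,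
      exists_prop]
    exact ⟨fun ⟨hle, hinj, hcov⟩ => ⟨_, hcov, hle, hinj, rfl⟩,
      fun ⟨_, hcov, hle, hinj, h⟩ => ⟨hle, hinj, h ▸ hcov⟩⟩
  have hdisj : {𝒮 | IsPrivateCover 𝒮}.PairwiseDisjoint (levelFiber m) :=
    fun 𝒮 _ 𝒯 _ hne => Set.disjoint_left.2 fun L h₁ h₂ => hne (h₁.2.2.symm.trans h₂.2.2)
  rw [hunion, (Set.toFinite _).ncard_biUnion
    (fun _ _ => levelFiber_eq_image_sections ▸ finite_toSet _) hdisj, ← coe_filter_univ,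
    finsum_mem_coe_finset]
  exact sum_congr rfl fun _ _ => ncard_levelFiber

theorem filter_isPrivateCover_fin_three :
    ({𝒮 | IsPrivateCover 𝒮} : Finset (Finset (Finset (Fin 3)))) =
      {{univ}, {{0, 1}, {0, 2}}, {{0, 1}, {1, 2}}, {{0, 2}, {1, 2}}, {{0}, {1, 2}}, {{1}, {0, 2}},
        {{2}, {0, 1}}, {{0}, {1}, {2}}} := by
  decide

end DominantCount

/-- Monomial ideals in `K[x,y,z]` are identified with their minimal monomial generating
sets (finite antichains of exponent vectors).  The number of dominant monomial ideals in
`K[x,y,z]` whose minimal generators have lcm `x^m₁ y^m₂ z^m₃` (with `mᵢ ≥ 1`) is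
`1 + m₁²m₂²m₃² + m₁m₂ + m₁m₃ + m₂m₃ + 3 m₁m₂m₃`. -/
theorem count_dominant_three_vars (m₁ m₂ m₃ : ℕ) (h₁ : 1 ≤ m₁) (h₂ : 1 ≤ m₂) (h₃ : 1 ≤ m₃) :
    Set.ncard {L : Finset (Fin 3 → ℕ) |
      (∀ u ∈ L, ∀ v ∈ L, u ≤ v → u = v) ∧ DominantSet L ∧ mLcm L = ![m₁, m₂, m₃]} =
      1 + m₁ ^ 2 * m₂ ^ 2 * m₃ ^ 2 + m₁ * m₂ + m₁ * m₃ + m₂ * m₃ + 3 * (m₁ * m₂ * m₃) := by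
  have hm : ∀ t, ![m₁, m₂, m₃] t ≠ 0 := by
    simp only [Fin.forall_fin_succ, Matrix.cons_val_zero, Matrix.cons_val_succ,
      IsEmpty.forall_iff, and_true]
    omega
  have hanti : {L : Finset (Fin 3 → ℕ) | (∀ u ∈ L, ∀ v ∈ L, u ≤ v → u = v) ∧ DominantSet L ∧
      mLcm L = ![m₁, m₂, m₃]} = {L | DominantSet L ∧ mLcm L = ![m₁, m₂, m₃]} := by
    ext L
    exact and_iff_right_of_imp fun h u hu v hv => h.1.eq_of_le hu hv
  rw [hanti, DominantCount.ncard_setOf_dominantSet_and_mLcm_eq hm,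
    DominantCount.filter_isPrivateCover_fin_three]
  simp +decide only [sum_insert, sum_singleton, prod_insert, prod_singleton, mem_insert,
    mem_singleton, Fin.prod_univ_three, Matrix.cons_val_zero, Matrix.cons_val_one, Matrix.cons_val,
    Fin.isValue, ite_mul, mul_ite, one_mul, mul_one, reduceIte, not_false_eq_true]
  ring
end

section
/- The number of dominant monomial ideals in K[x,y,z] with exactly 3 minimal generators and lcm x^{m_1} y^{m_2} z^{m_3} is m_1^2 m_2^2 m_3^2; these are exactly the ideals generated by x^{m_1} y^{j_1} z^{k_1}, x^{i_2} y^{m_2} z^{k_2}, x^{i_3} y^{j_3} z^{m_3} with 0 ≤ i_2, i_3 < m_1, 0 ≤ j_1, j_3 < m_2, 0 ≤ k_1, k_2 < m_3. -/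
lemma vec3_eta (v : Fin 3 → ℕ) : v = ![v 0, v 1, v 2] := by
  funext i; fin_cases i <;> rfl

lemma vec_eq_iff (a b c a' b' c' : ℕ) : ![a,b,c] = ![a',b',c'] ↔ a = a' ∧ b = b' ∧ c = c' := by
  constructor
  · intro h; exact ⟨congrFun h 0, congrFun h 1, congrFun h 2⟩
  · rintro ⟨rfl,rfl,rfl⟩; rfl

lemma sup3 (a b c : Fin 3 → ℕ) (i : Fin 3) :
    mLcm {a, b, c} i = a i ⊔ (b i ⊔ c i) := by
  simp [mLcm]

lemma helper (m₁ m₂ m₃ : ℕ) (a b c : Fin 3 → ℕ) (L : Finset (Fin 3 → ℕ))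
    (hL : ({a, b, c} : Finset (Fin 3 → ℕ)) = L)
    (h1 : b 0 < a 0) (h2 : c 0 < a 0)
    (h3 : a 1 < b 1) (h4 : c 1 < b 1)
    (h5 : a 2 < c 2) (h6 : b 2 < c 2)
    (hlcm : mLcm L = ![m₁, m₂, m₃]) :
    ∃ i₂ i₃ j₁ j₃ k₁ k₂ : ℕ, i₂ < m₁ ∧ i₃ < m₁ ∧ j₁ < m₂ ∧ j₃ < m₂ ∧ k₁ < m₃ ∧ k₂ < m₃ ∧
      L = {![m₁, j₁, k₁], ![i₂, m₂, k₂], ![i₃, j₃, m₃]} := by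
  subst hL
  have e0 : a 0 = m₁ := by have := congrFun hlcm 0; rw [sup3] at this; simp at this; omega
  have e1 : b 1 = m₂ := by have := congrFun hlcm 1; rw [sup3] at this; simp at this; omega
  have e2 : c 2 = m₃ := by have := congrFun hlcm 2; rw [sup3] at this; simp at this; omega
  refine ⟨b 0, c 0, a 1, c 1, a 2, b 2, by omega, by omega, by omega, by omega, by omega, by omega, ?_⟩
  have ea : a = ![m₁, a 1, a 2] := by rw [← e0]; exact vec3_eta a
  have eb : b = ![b 0, m₂, b 2] := by rw [← e1]; exact vec3_eta b
  have ec : c = ![c 0, c 1, m₃] := by rw [← e2]; exact vec3_eta c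
  rw [← ea, ← eb, ← ec]

lemma dominant_antichain {n : ℕ} {L : Finset (Fin n → ℕ)} (hD : DominantSet L) :
    ∀ u ∈ L, ∀ v ∈ L, u ≤ v → u = v := by
  intro u hu v hv huv
  by_contra h
  obtain ⟨i, hi⟩ := hD u hu
  have h1 := hi v hv (fun e => h e.symm)
  have h2 : u i ≤ v i := huv i
  omega

lemma helper2 (m₁ m₂ m₃ i₂ i₃ j₁ j₃ k₁ k₂ : ℕ)
    (h1 : i₂ < m₁) (h2 : i₃ < m₁) (h3 : j₁ < m₂) (h4 : j₃ < m₂) (h5 : k₁ < m₃) (h6 : k₂ < m₃) :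
    DominantSet ({![m₁, j₁, k₁], ![i₂, m₂, k₂], ![i₃, j₃, m₃]} : Finset (Fin 3 → ℕ)) ∧
      ({![m₁, j₁, k₁], ![i₂, m₂, k₂], ![i₃, j₃, m₃]} : Finset (Fin 3 → ℕ)).card = 3 ∧
      mLcm ({![m₁, j₁, k₁], ![i₂, m₂, k₂], ![i₃, j₃, m₃]} : Finset (Fin 3 → ℕ)) = ![m₁, m₂, m₃] := by
  have d12 : ![m₁, j₁, k₁] ≠ ![i₂, m₂, k₂] := by simp [vec_eq_iff]; omega
  have d13 : ![m₁, j₁, k₁] ≠ ![i₃, j₃, m₃] := by simp [vec_eq_iff]; omega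
  have d23 : ![i₂, m₂, k₂] ≠ ![i₃, j₃, m₃] := by simp [vec_eq_iff]; omega
  refine ⟨?_, ?_, ?_⟩
  · intro v hv
    simp only [Finset.mem_insert, Finset.mem_singleton] at hv
    rcases hv with rfl | rfl | rfl
    · refine ⟨0, ?_⟩
      intro w hw hne
      simp only [Finset.mem_insert, Finset.mem_singleton] at hw
      rcases hw with rfl | rfl | rfl
      · exact absurd rfl hne
      · simpa using h1
      · simpa using h2
    · refine ⟨1, ?_⟩
      intro w hw hne
      simp only [Finset.mem_insert, Finset.mem_singleton] at hw
      rcases hw with rfl | rfl | rfl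
      · simpa using h3
      · exact absurd rfl hne
      · simpa using h4
    · refine ⟨2, ?_⟩
      intro w hw hne
      simp only [Finset.mem_insert, Finset.mem_singleton] at hw
      rcases hw with rfl | rfl | rfl
      · simpa using h5
      · simpa using h6
      · exact absurd rfl hne
  · rw [Finset.card_insert_of_notMem (by simp [d12, d13]),
      Finset.card_insert_of_notMem (by simp [d23]), Finset.card_singleton]
  · funext i
    rw [sup3]
    fin_cases i <;> simp <;> omega

def auxF (m₁ m₂ m₃ : ℕ) : ℕ×ℕ×ℕ×ℕ×ℕ×ℕ → Finset (Fin 3 → ℕ)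
  | (i₂,i₃,j₁,j₃,k₁,k₂) => {![m₁, j₁, k₁], ![i₂, m₂, k₂], ![i₃, j₃, m₃]}

lemma count_lemma (m₁ m₂ m₃ : ℕ) :
    Set.ncard {L : Finset (Fin 3 → ℕ) |
        ∃ i₂ i₃ j₁ j₃ k₁ k₂ : ℕ, i₂ < m₁ ∧ i₃ < m₁ ∧ j₁ < m₂ ∧ j₃ < m₂ ∧ k₁ < m₃ ∧ k₂ < m₃ ∧
          L = {![m₁, j₁, k₁], ![i₂, m₂, k₂], ![i₃, j₃, m₃]}} = m₁ ^ 2 * m₂ ^ 2 * m₃ ^ 2 := by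
  classical
  set T : Finset (ℕ×ℕ×ℕ×ℕ×ℕ×ℕ) :=
    (Finset.range m₁) ×ˢ (Finset.range m₁) ×ˢ (Finset.range m₂) ×ˢ (Finset.range m₂) ×ˢ
      (Finset.range m₃) ×ˢ (Finset.range m₃) with hT
  have hmem : ∀ i₂ i₃ j₁ j₃ k₁ k₂ : ℕ, ((i₂,i₃,j₁,j₃,k₁,k₂) : ℕ×ℕ×ℕ×ℕ×ℕ×ℕ) ∈ T ↔
      i₂ < m₁ ∧ i₃ < m₁ ∧ j₁ < m₂ ∧ j₃ < m₂ ∧ k₁ < m₃ ∧ k₂ < m₃ := by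
    intros
    simp [hT, Finset.mem_product, and_assoc]
  have hset : {L : Finset (Fin 3 → ℕ) |
        ∃ i₂ i₃ j₁ j₃ k₁ k₂ : ℕ, i₂ < m₁ ∧ i₃ < m₁ ∧ j₁ < m₂ ∧ j₃ < m₂ ∧ k₁ < m₃ ∧ k₂ < m₃ ∧
          L = {![m₁, j₁, k₁], ![i₂, m₂, k₂], ![i₃, j₃, m₃]}} = ↑(T.image (auxF m₁ m₂ m₃)) := by
    ext L
    simp only [Set.mem_setOf_eq, Finset.coe_image, Set.mem_image, Finset.mem_coe]
    constructor
    · rintro ⟨i₂,i₃,j₁,j₃,k₁,k₂,b1,b2,b3,b4,b5,b6,rfl⟩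
      exact ⟨(i₂,i₃,j₁,j₃,k₁,k₂), (hmem _ _ _ _ _ _).2 ⟨b1,b2,b3,b4,b5,b6⟩, rfl⟩
    · rintro ⟨⟨i₂,i₃,j₁,j₃,k₁,k₂⟩, hp, rfl⟩
      obtain ⟨b1,b2,b3,b4,b5,b6⟩ := (hmem _ _ _ _ _ _).1 hp
      exact ⟨i₂,i₃,j₁,j₃,k₁,k₂,b1,b2,b3,b4,b5,b6, rfl⟩
  have hinj : Set.InjOn (auxF m₁ m₂ m₃) ↑T := by
    rintro ⟨i₂,i₃,j₁,j₃,k₁,k₂⟩ hp ⟨i₂',i₃',j₁',j₃',k₁',k₂'⟩ hq h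
    rw [Finset.mem_coe, hmem] at hp
    rw [Finset.mem_coe, hmem] at hq
    obtain ⟨b1,b2,b3,b4,b5,b6⟩ := hp
    obtain ⟨c1,c2,c3,c4,c5,c6⟩ := hq
    simp only [auxF] at h
    have h1 : ![m₁, j₁, k₁] ∈
        ({![m₁, j₁', k₁'], ![i₂', m₂, k₂'], ![i₃', j₃', m₃]} : Finset (Fin 3 → ℕ)) := by
      rw [← h]; simp
    have h2 : ![i₂, m₂, k₂] ∈
        ({![m₁, j₁', k₁'], ![i₂', m₂, k₂'], ![i₃', j₃', m₃]} : Finset (Fin 3 → ℕ)) := by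
      rw [← h]; simp
    have h3 : ![i₃, j₃, m₃] ∈
        ({![m₁, j₁', k₁'], ![i₂', m₂, k₂'], ![i₃', j₃', m₃]} : Finset (Fin 3 → ℕ)) := by
      rw [← h]; simp
    simp only [Finset.mem_insert, Finset.mem_singleton, vec_eq_iff] at h1 h2 h3
    simp only [Prod.mk.injEq]
    omega
  rw [hset, Set.ncard_coe_finset, Finset.card_image_of_injOn hinj]
  simp only [hT, Finset.card_product, Finset.card_range]
  ring

/-- Monomial ideals are identified with their minimal monomial generating sets (finite
antichains of exponent vectors).  The dominant monomial ideals in `K[x,y,z]` with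
exactly 3 minimal generators and lcm `x^m₁ y^m₂ z^m₃` are exactly those generated by
`x^m₁ y^j₁ z^k₁, x^i₂ y^m₂ z^k₂, x^i₃ y^j₃ z^m₃` with `i₂,i₃ < m₁`, `j₁,j₃ < m₂`,
`k₁,k₂ < m₃`, and their number is `(m₁ m₂ m₃)²`. -/
theorem dominant_three_vars_three_gens (m₁ m₂ m₃ : ℕ) :
    {L : Finset (Fin 3 → ℕ) |
        (∀ u ∈ L, ∀ v ∈ L, u ≤ v → u = v) ∧ DominantSet L ∧ L.card = 3 ∧
          mLcm L = ![m₁, m₂, m₃]} =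
      {L : Finset (Fin 3 → ℕ) |
        ∃ i₂ i₃ j₁ j₃ k₁ k₂ : ℕ, i₂ < m₁ ∧ i₃ < m₁ ∧ j₁ < m₂ ∧ j₃ < m₂ ∧ k₁ < m₃ ∧ k₂ < m₃ ∧
          L = {![m₁, j₁, k₁], ![i₂, m₂, k₂], ![i₃, j₃, m₃]}} ∧
    Set.ncard {L : Finset (Fin 3 → ℕ) |
        (∀ u ∈ L, ∀ v ∈ L, u ≤ v → u = v) ∧ DominantSet L ∧ L.card = 3 ∧
          mLcm L = ![m₁, m₂, m₃]} = m₁ ^ 2 * m₂ ^ 2 * m₃ ^ 2 := by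
  have hEq : {L : Finset (Fin 3 → ℕ) |
        (∀ u ∈ L, ∀ v ∈ L, u ≤ v → u = v) ∧ DominantSet L ∧ L.card = 3 ∧
          mLcm L = ![m₁, m₂, m₃]} =
      {L : Finset (Fin 3 → ℕ) |
        ∃ i₂ i₃ j₁ j₃ k₁ k₂ : ℕ, i₂ < m₁ ∧ i₃ < m₁ ∧ j₁ < m₂ ∧ j₃ < m₂ ∧ k₁ < m₃ ∧ k₂ < m₃ ∧
          L = {![m₁, j₁, k₁], ![i₂, m₂, k₂], ![i₃, j₃, m₃]}} := by
    ext L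
    simp only [Set.mem_setOf_eq]
    constructor
    · rintro ⟨hanti, hdom, hcard, hlcm⟩
      obtain ⟨a, b, c, hab, hac, hbc, rfl⟩ := Finset.card_eq_three.mp hcard
      obtain ⟨ia, hia⟩ := hdom a (by simp)
      obtain ⟨ib, hib⟩ := hdom b (by simp)
      obtain ⟨ic, hic⟩ := hdom c (by simp)
      have hdab : ia ≠ ib := by
        intro e
        have t1 := hia b (by simp) (Ne.symm hab)
        have t2 := hib a (by simp) hab
        rw [e] at t1
        omega
      have hdac : ia ≠ ic := by
        intro e
        have t1 := hia c (by simp) (Ne.symm hac)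
        have t2 := hic a (by simp) hac
        rw [e] at t1
        omega
      have hdbc : ib ≠ ic := by
        intro e
        have t1 := hib c (by simp) (Ne.symm hbc)
        have t2 := hic b (by simp) hbc
        rw [e] at t1
        omega
      have fin3 : ∀ i : Fin 3, i = 0 ∨ i = 1 ∨ i = 2 := by decide
      rcases fin3 ia with rfl | rfl | rfl <;> rcases fin3 ib with rfl | rfl | rfl <;>
          rcases fin3 ic with rfl | rfl | rfl <;>
        first
        | exact absurd rfl hdab
        | exact absurd rfl hdac
        | exact absurd rfl hdbc
        | exact helper m₁ m₂ m₃ a b c _ rfl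
            (hia b (by simp) (Ne.symm hab)) (hia c (by simp) (Ne.symm hac))
            (hib a (by simp) hab) (hib c (by simp) (Ne.symm hbc))
            (hic a (by simp) hac) (hic b (by simp) hbc) hlcm
        | exact helper m₁ m₂ m₃ a c b _ (by ext w; simp; tauto)
            (hia c (by simp) (Ne.symm hac)) (hia b (by simp) (Ne.symm hab))
            (hic a (by simp) hac) (hic b (by simp) hbc)
            (hib a (by simp) hab) (hib c (by simp) (Ne.symm hbc)) hlcm
        | exact helper m₁ m₂ m₃ b a c _ (by ext w; simp; tauto)
            (hib a (by simp) hab) (hib c (by simp) (Ne.symm hbc))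
            (hia b (by simp) (Ne.symm hab)) (hia c (by simp) (Ne.symm hac))
            (hic b (by simp) hbc) (hic a (by simp) hac) hlcm
        | exact helper m₁ m₂ m₃ c a b _ (by ext w; simp; tauto)
            (hic a (by simp) hac) (hic b (by simp) hbc)
            (hia c (by simp) (Ne.symm hac)) (hia b (by simp) (Ne.symm hab))
            (hib c (by simp) (Ne.symm hbc)) (hib a (by simp) hab) hlcm
        | exact helper m₁ m₂ m₃ b c a _ (by ext w; simp; tauto)
            (hib c (by simp) (Ne.symm hbc)) (hib a (by simp) hab)
            (hic b (by simp) hbc) (hic a (by simp) hac)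
            (hia b (by simp) (Ne.symm hab)) (hia c (by simp) (Ne.symm hac)) hlcm
        | exact helper m₁ m₂ m₃ c b a _ (by ext w; simp; tauto)
            (hic b (by simp) hbc) (hic a (by simp) hac)
            (hib c (by simp) (Ne.symm hbc)) (hib a (by simp) hab)
            (hia c (by simp) (Ne.symm hac)) (hia b (by simp) (Ne.symm hab)) hlcm
    · rintro ⟨i₂,i₃,j₁,j₃,k₁,k₂,b1,b2,b3,b4,b5,b6,rfl⟩
      obtain ⟨hdom, hcard, hlcm⟩ := helper2 m₁ m₂ m₃ i₂ i₃ j₁ j₃ k₁ k₂ b1 b2 b3 b4 b5 b6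
      exact ⟨dominant_antichain hdom, hdom, hcard, hlcm⟩
  refine ⟨hEq, ?_⟩
  rw [hEq]
  exact count_lemma m₁ m₂ m₃
end

section
/- Let I = (a^3 b^2, b^3 c^2, a^2 c^3, abc) in S = K[a,b,c]. Then L = {a^3 b^2, b^3 c^2, a^2 c^3} is a dominant subset of G(I) of maximum cardinality among dominant subsets, yet proj dim(S/I) = 2. -/
/-!
`S/I` has the free resolution
`0 → S³ → S⁴ → S → S/I → 0`, where `S⁴ → S` sends the basis to the generators and `S³ → S⁴` is
given by the syzygy matrix whose columns are `(c, 0, 0, -a²b)`, `(0, a, 0, -b²c)`, `(0, 0, b, -ac²)`.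
Exactness in the middle comes from primality of the variables: in a relation
`f₀ a³b² + f₁ b³c² + f₂ a²c³ + f₃ abc = 0` the variable `c` divides every term except the first,
so `c ∣ f₀`, and likewise `a ∣ f₁`, `b ∣ f₂`. All entries of both matrices lie in `m = (a, b, c)`,
so the resolution is minimal: every nonzero map from `S⁴` or `S³` to `S/m` is a cocycle that is
not a coboundary, whence `Ext¹(S/I, S/m)` and `Ext²(S/I, S/m)` are nonzero and `pd(S/I) = 2`.
The generator `abc` is not strictly maximal in any coordinate, so `G(I)` is not dominant and
every dominant subset has at most three elements.
-/

open CategoryTheory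

/-- The projective dimension of a module `M` over `R`: the least `d` such that
`Ext^{d+1}(M, N) = 0` for all modules `N` (and `⊤` if no such `d` exists). -/
noncomputable def projDim (R : Type) [CommRing R] (M : ModuleCat R) : ℕ∞ :=
  sInf ((fun d : ℕ => (d : ℕ∞)) ''
    {d : ℕ | ∀ N : ModuleCat R, Subsingleton (((Ext R (ModuleCat R) (d + 1)).obj
      (Opposite.op M)).obj N)})

open MvPolynomial

open CategoryTheory.Limits

universe u

theorem projDim_eq_of_subsingleton_ext (R : Type) [CommRing R] (M : ModuleCat R) (n : ℕ)
    (hvanish : ∀ N : ModuleCat R,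
      Subsingleton (((Ext R (ModuleCat R) (n + 1)).obj (Opposite.op M)).obj N))
    (hne : ∀ k < n, ∃ N : ModuleCat R,
      ¬ Subsingleton (((Ext R (ModuleCat R) (k + 1)).obj (Opposite.op M)).obj N)) :
    projDim R M = n := by
  refine le_antisymm (sInf_le ⟨n, hvanish, rfl⟩) (le_sInf ?_)
  rintro _ ⟨k, hk, rfl⟩
  by_contra hlt
  obtain ⟨N, hN⟩ := hne k (Nat.cast_lt.1 (not_le.1 hlt))
  exact hN (hk N)

theorem LinearMap.map_eq_zero_of_mem_smul_top {R N : Type*} [CommRing R] [AddCommGroup N]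
    [Module R N] {J : Ideal R} (f : N →ₗ[R] R ⧸ J) {x : N} (hx : x ∈ J • (⊤ : Submodule R N)) :
    f x = 0 := by
  refine (Submodule.smul_le.2 fun r hr y _ => ?_ : J • ⊤ ≤ LinearMap.ker f) hx
  rw [LinearMap.mem_ker, map_smul]
  induction f y using Submodule.Quotient.induction_on with
  | H s =>
    rw [← Submodule.Quotient.mk_smul, Submodule.Quotient.mk_eq_zero]
    exact J.mul_mem_right s hr

theorem Submodule.pi_mem_smul_top {R ι : Type*} [CommRing R] [Fintype ι]
    {J : Ideal R} {x : ι → R} (hx : ∀ i, x i ∈ J) : x ∈ J • (⊤ : Submodule R (ι → R)) := by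
  classical
  rw [pi_eq_sum_univ x]
  exact Submodule.sum_mem _ fun i _ => Submodule.smul_mem_smul (hx i) trivial

namespace CategoryTheory.ProjectiveResolution

section Abelian

variable {R : Type*} [Ring R] {C : Type*} [Category C] [Abelian C] [Linear R C]
  [EnoughProjectives C] {X : C} (P : ProjectiveResolution X)

theorem isZero_ext_of_isZero {n : ℕ} (h : IsZero (P.complex.X n)) (Y : C) :
    IsZero (((Ext R C n).obj (Opposite.op X)).obj Y) := by
  refine IsZero.of_iso ?_ (P.isoExt n Y)
  rw [← HomologicalComplex.exactAt_iff_isZero_homology, HomologicalComplex.exactAt_iff]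
  refine ShortComplex.exact_of_isZero_X₂ _ ?_
  rw [ModuleCat.isZero_iff_subsingleton]
  exact ⟨fun f g => h.eq_of_src f g⟩

theorem exists_d_comp_eq_of_subsingleton_ext {Y : C} {n : ℕ}
    (hext : Subsingleton (((Ext R C (n + 1)).obj (Opposite.op X)).obj Y))
    (φ : P.complex.X (n + 1) ⟶ Y) (hφ : P.complex.d (n + 2) (n + 1) ≫ φ = 0) :
    ∃ ψ : P.complex.X n ⟶ Y, P.complex.d (n + 1) n ≫ ψ = φ := by
  have hexact : (P.complex.linearYonedaObj R Y).ExactAt (n + 1) := by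
    rw [HomologicalComplex.exactAt_iff_isZero_homology, ModuleCat.isZero_iff_subsingleton]
    exact (P.isoExt (n + 1) Y).symm.toLinearEquiv.toEquiv.subsingleton
  rw [HomologicalComplex.exactAt_iff' _ n (n + 1) (n + 2) (by simp) (by simp),
    ShortComplex.moduleCat_exact_iff] at hexact
  exact hexact φ hφ

end Abelian

variable {R : Type u} [CommRing R] {M : ModuleCat.{u} R} (P : ProjectiveResolution M)

theorem not_subsingleton_ext_quotient_of_d_mem_smul_top (J : Ideal R) {n : ℕ}
    (h₁ : ∀ x, P.complex.d (n + 1) n x ∈ J • (⊤ : Submodule R (P.complex.X n)))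
    (h₂ : ∀ x, P.complex.d (n + 2) (n + 1) x ∈ J • (⊤ : Submodule R (P.complex.X (n + 1))))
    {φ : P.complex.X (n + 1) ⟶ ModuleCat.of R (R ⧸ J)} (hφ : φ ≠ 0) :
    ¬ Subsingleton
      (((Ext R (ModuleCat R) (n + 1)).obj (Opposite.op M)).obj (ModuleCat.of R (R ⧸ J))) := by
  intro hext
  have hcocycle : P.complex.d (n + 2) (n + 1) ≫ φ = 0 := by
    ext x
    exact φ.hom.map_eq_zero_of_mem_smul_top (h₂ x)
  obtain ⟨ψ, hψ⟩ := P.exists_d_comp_eq_of_subsingleton_ext hext φ hcocycle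
  refine hφ (hψ.symm.trans ?_)
  ext x
  exact ψ.hom.map_eq_zero_of_mem_smul_top (h₁ x)

end CategoryTheory.ProjectiveResolution

namespace ModuleCat

theorem ofHom_mkQ_comp_proj_ne_zero {R ι : Type u} [CommRing R] {J : Ideal R} (hJ : J ≠ ⊤)
    (i : ι) : ofHom (J.mkQ ∘ₗ LinearMap.proj i : (ι → R) →ₗ[R] R ⧸ J) ≠ 0 := by
  intro h
  have h₁ : J.mkQ (1 : R) = 0 := congr($h (fun _ => 1))
  exact hJ ((Ideal.eq_top_iff_one J).2 ((Submodule.Quotient.mk_eq_zero J).1 h₁))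

variable {R : Type u} [Ring R] {F₀ F₁ F₂ M : Type u} [AddCommGroup F₀] [AddCommGroup F₁]
  [AddCommGroup F₂] [AddCommGroup M] [Module R F₀] [Module R F₁] [Module R F₂] [Module R M]

variable (R F₀ F₁ F₂) in
noncomputable def complexOfLengthTwoX : ℕ → ModuleCat.{u} R
  | 0 => of R F₀
  | 1 => of R F₁
  | 2 => of R F₂
  | _ + 3 => of R PUnit

noncomputable def complexOfLengthTwoD (d₂ : F₂ →ₗ[R] F₁) (d₁ : F₁ →ₗ[R] F₀) :
    ∀ n, complexOfLengthTwoX R F₀ F₁ F₂ (n + 1) ⟶ complexOfLengthTwoX R F₀ F₁ F₂ n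
  | 0 => ofHom d₁
  | 1 => ofHom d₂
  | _ + 2 => 0

noncomputable def complexOfLengthTwo (d₂ : F₂ →ₗ[R] F₁) (d₁ : F₁ →ₗ[R] F₀) (h : d₁ ∘ₗ d₂ = 0) :
    ChainComplex (ModuleCat.{u} R) ℕ :=
  ChainComplex.of (complexOfLengthTwoX R F₀ F₁ F₂) (complexOfLengthTwoD d₂ d₁) fun
    | 0 => hom_ext h
    | _ + 1 => zero_comp

variable (R F₀ F₁ F₂) in
lemma isZero_complexOfLengthTwoX (n : ℕ) : IsZero (complexOfLengthTwoX R F₀ F₁ F₂ (n + 3)) :=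
  isZero_of_subsingleton (of R PUnit)

section Resolution

variable [Module.Projective R F₀] [Module.Projective R F₁] [Module.Projective R F₂]
  {d₂ : F₂ →ₗ[R] F₁} {d₁ : F₁ →ₗ[R] F₀} {ε : F₀ →ₗ[R] M}
  (hd₂ : Function.Injective d₂) (h₁ : LinearMap.range d₂ = LinearMap.ker d₁)
  (h₀ : LinearMap.range d₁ = LinearMap.ker ε) (hε : Function.Surjective ε)

noncomputable def projectiveResolutionOfLengthTwo : ProjectiveResolution (of R M) where
  complex := complexOfLengthTwo d₂ d₁ (LinearMap.range_le_ker_iff.1 h₁.le)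
  projective
    | 0 => inferInstanceAs (Projective (of R F₀))
    | 1 => inferInstanceAs (Projective (of R F₁))
    | 2 => inferInstanceAs (Projective (of R F₂))
    | n + 3 => (isZero_complexOfLengthTwoX R F₀ F₁ F₂ n).projective
  π := (ChainComplex.toSingle₀Equiv _ _).symm ⟨ofHom ε, by ext x; exact h₀.le ⟨x, rfl⟩⟩
  quasiIso := ⟨fun
    | 0 => by
        rw [ChainComplex.quasiIsoAt₀_iff, ShortComplex.quasiIso_iff_of_zeros' _ rfl rfl rfl]
        constructor
        · rw [ShortComplex.moduleCat_exact_iff_range_eq_ker]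
          exact h₀
        · rw [ModuleCat.epi_iff_surjective]
          exact hε
    | 1 => by
        rw [quasiIsoAt_iff_exactAt' (hL := ChainComplex.exactAt_succ_single_obj ..),
          HomologicalComplex.exactAt_iff' _ 2 1 0 (by simp) (by simp),
          ShortComplex.moduleCat_exact_iff_range_eq_ker]
        exact h₁
    | 2 => by
        rw [quasiIsoAt_iff_exactAt' (hL := ChainComplex.exactAt_succ_single_obj ..),
          HomologicalComplex.exactAt_iff' _ 3 2 1 (by simp) (by simp),
          ShortComplex.moduleCat_exact_iff_range_eq_ker]
        exact LinearMap.range_zero.trans (LinearMap.ker_eq_bot.2 hd₂).symm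
    | n + 3 => by
        rw [quasiIsoAt_iff_exactAt' (hL := ChainComplex.exactAt_succ_single_obj ..),
          HomologicalComplex.exactAt_iff]
        exact ShortComplex.exact_of_isZero_X₂ _ (isZero_complexOfLengthTwoX R F₀ F₁ F₂ n)⟩

lemma isZero_projectiveResolutionOfLengthTwo_X (n : ℕ) :
    IsZero ((projectiveResolutionOfLengthTwo hd₂ h₁ h₀ hε).complex.X (n + 3)) :=
  isZero_complexOfLengthTwoX R F₀ F₁ F₂ n

end Resolution

end ModuleCat

theorem MvPolynomial.not_X_dvd_X_pow_mul_X_pow {σ R : Type*} [CommRing R] [IsDomain R]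
    {i j k : σ} (hj : i ≠ j) (hk : i ≠ k) (m n : ℕ) :
    ¬ (X i : MvPolynomial σ R) ∣ X j ^ m * X k ^ n := by
  intro h
  rcases X_prime.dvd_or_dvd h with h | h
  · exact hj (X_dvd_X.1 (X_prime.dvd_of_dvd_pow h))
  · exact hk (X_dvd_X.1 (X_prime.dvd_of_dvd_pow h))

namespace MonomialExample

section

variable {R : Type u} [CommRing R]

local notation "S" => MvPolynomial (Fin 3) R

variable (R) in
noncomputable def ideal : Ideal S :=
  Ideal.span {X 0 ^ 3 * X 1 ^ 2, X 1 ^ 3 * X 2 ^ 2, X 0 ^ 2 * X 2 ^ 3, X 0 * X 1 * X 2}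

variable (R) in
noncomputable def generators : Fin 4 → S :=
  ![X 0 ^ 3 * X 1 ^ 2, X 1 ^ 3 * X 2 ^ 2, X 0 ^ 2 * X 2 ^ 3, X 0 * X 1 * X 2]

variable (R) in
noncomputable def syzygyMatrix : Matrix (Fin 4) (Fin 3) S :=
  !![X 2, 0, 0; 0, X 0, 0; 0, 0, X 1; -(X 0 ^ 2 * X 1), -(X 1 ^ 2 * X 2), -(X 0 * X 2 ^ 2)]

theorem range_linearCombination_generators :
    LinearMap.range (Fintype.linearCombination S (generators R)) = ideal R := by
  simp only [Fintype.range_linearCombination, generators, Matrix.range_cons, Matrix.range_empty,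
    Set.union_empty, Set.singleton_union]
  rfl

theorem exists_syzygy_of_relation [IsDomain R] {f₀ f₁ f₂ f₃ : S}
    (h : f₀ * (X 0 ^ 3 * X 1 ^ 2) + f₁ * (X 1 ^ 3 * X 2 ^ 2) + f₂ * (X 0 ^ 2 * X 2 ^ 3)
      + f₃ * (X 0 * X 1 * X 2) = 0) :
    ∃ q₀ q₁ q₂ : S, f₀ = X 2 * q₀ ∧ f₁ = X 0 * q₁ ∧ f₂ = X 1 * q₂ ∧
      f₃ = -(X 0 ^ 2 * X 1 * q₀ + X 1 ^ 2 * X 2 * q₁ + X 0 * X 2 ^ 2 * q₂) := by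
  have h₀ : X 2 ∣ f₀ * (X 0 ^ 3 * X 1 ^ 2) :=
    ⟨-(f₁ * X 1 ^ 3 * X 2 + f₂ * X 0 ^ 2 * X 2 ^ 2 + f₃ * X 0 * X 1), by linear_combination h⟩
  obtain ⟨q₀, rfl⟩ := (X_prime.dvd_or_dvd h₀).resolve_right
    (not_X_dvd_X_pow_mul_X_pow (by decide : (2 : Fin 3) ≠ 0) (by decide : (2 : Fin 3) ≠ 1) 3 2)
  have h₁ : X 0 ∣ f₁ * (X 1 ^ 3 * X 2 ^ 2) :=
    ⟨-(q₀ * X 0 ^ 2 * X 1 ^ 2 * X 2 + f₂ * X 0 * X 2 ^ 3 + f₃ * X 1 * X 2),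
      by linear_combination h⟩
  obtain ⟨q₁, rfl⟩ := (X_prime.dvd_or_dvd h₁).resolve_right
    (not_X_dvd_X_pow_mul_X_pow (by decide : (0 : Fin 3) ≠ 1) (by decide : (0 : Fin 3) ≠ 2) 3 2)
  have h₂ : X 1 ∣ f₂ * (X 0 ^ 2 * X 2 ^ 3) :=
    ⟨-(q₀ * X 0 ^ 3 * X 1 * X 2 + q₁ * X 0 * X 1 ^ 2 * X 2 ^ 2 + f₃ * X 0 * X 2),
      by linear_combination h⟩
  obtain ⟨q₂, rfl⟩ := (X_prime.dvd_or_dvd h₂).resolve_right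
    (not_X_dvd_X_pow_mul_X_pow (by decide : (1 : Fin 3) ≠ 0) (by decide : (1 : Fin 3) ≠ 2) 2 3)
  refine ⟨q₀, q₁, q₂, rfl, rfl, rfl, ?_⟩
  have hne : (X 0 * X 1 * X 2 : S) ≠ 0 := by simp [X_ne_zero]
  refine eq_neg_of_add_eq_zero_left ((mul_eq_zero.1 ?_).resolve_left hne)
  linear_combination h

theorem range_mulVecLin_syzygyMatrix [IsDomain R] :
    LinearMap.range (syzygyMatrix R).mulVecLin =
      LinearMap.ker (Fintype.linearCombination S (generators R)) := by
  ext f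
  simp only [LinearMap.mem_range, LinearMap.mem_ker, Fintype.linearCombination_apply,
    Fin.sum_univ_four, generators, smul_eq_mul]
  constructor
  · rintro ⟨g, rfl⟩
    simp only [syzygyMatrix, Matrix.mulVecBilin_apply, Matrix.mulVec, dotProduct, Matrix.of_apply,
      Matrix.cons_val', Matrix.cons_val_fin_one, Matrix.cons_val_zero, Matrix.cons_val_one,
      Matrix.cons_val, Fin.sum_univ_three]
    ring
  · intro h
    obtain ⟨q₀, q₁, q₂, h₀, h₁, h₂, h₃⟩ := exists_syzygy_of_relation h
    refine ⟨![q₀, q₁, q₂], ?_⟩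
    ext1 i
    fin_cases i <;>
      simp [syzygyMatrix, Matrix.mulVec, dotProduct, Fin.sum_univ_three, h₀, h₁, h₂, h₃, add_comm]

theorem mulVecLin_syzygyMatrix_injective [IsDomain R] :
    Function.Injective (syzygyMatrix R).mulVecLin := by
  rw [← LinearMap.ker_eq_bot, LinearMap.ker_eq_bot']
  intro g hg
  have h (i : Fin 4) := congrFun hg i
  simp only [syzygyMatrix, Matrix.mulVecLin_apply, Matrix.mulVec, dotProduct,
    Fin.sum_univ_three] at h
  ext1 j
  fin_cases j
  · simpa [X_ne_zero] using h 0
  · simpa [X_ne_zero] using h 1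
  · simpa [X_ne_zero] using h 2

variable (R) in
noncomputable def resolution [IsDomain R] : ProjectiveResolution (ModuleCat.of S (S ⧸ ideal R)) :=
  ModuleCat.projectiveResolutionOfLengthTwo mulVecLin_syzygyMatrix_injective
    range_mulVecLin_syzygyMatrix (by rw [Submodule.ker_mkQ, range_linearCombination_generators])
    (ideal R).mkQ_surjective

theorem generators_mem_ker_constantCoeff (i : Fin 4) :
    generators R i ∈ RingHom.ker (constantCoeff : S →+* R) := by
  fin_cases i <;> simp [generators]

theorem syzygyMatrix_mem_ker_constantCoeff (i : Fin 4) (j : Fin 3) :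
    syzygyMatrix R i j ∈ RingHom.ker (constantCoeff : S →+* R) := by
  fin_cases i <;> fin_cases j <;> simp [syzygyMatrix]

end

section

variable (R : Type) [CommRing R] [IsDomain R]

local notation "S" => MvPolynomial (Fin 3) R

theorem projDim_quotient : projDim S (ModuleCat.of S (S ⧸ ideal R)) = 2 := by
  set J := RingHom.ker (constantCoeff : S →+* R)
  have hJ : J ≠ ⊤ := RingHom.ker_ne_top _
  have hd₁ (x : Fin 4 → S) : (resolution R).complex.d 1 0 x ∈ J • (⊤ : Submodule S S) := by
    rw [Ideal.smul_eq_mul, Ideal.mul_top]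
    show Fintype.linearCombination S (generators R) x ∈ J
    rw [Fintype.linearCombination_apply]
    exact J.sum_mem fun i _ => J.mul_mem_left _ (generators_mem_ker_constantCoeff i)
  have hd₂ (x : Fin 3 → S) : (resolution R).complex.d 2 1 x ∈ J • (⊤ : Submodule S (Fin 4 → S)) :=
    Submodule.pi_mem_smul_top fun i =>
      J.sum_mem fun j _ => J.mul_mem_right _ (syzygyMatrix_mem_ker_constantCoeff i j)
  have hd₃ : (resolution R).complex.d 3 2 = 0 :=
    (ModuleCat.isZero_projectiveResolutionOfLengthTwo_X _ _ _ _ 0).eq_of_src _ _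
  refine projDim_eq_of_subsingleton_ext _ _ 2 (fun N => ModuleCat.subsingleton_of_isZero
    ((resolution R).isZero_ext_of_isZero (n := 3)
      (ModuleCat.isZero_projectiveResolutionOfLengthTwo_X _ _ _ _ 0) N))
    fun k hk => ⟨ModuleCat.of S (S ⧸ J), ?_⟩
  interval_cases k
  · exact (resolution R).not_subsingleton_ext_quotient_of_d_mem_smul_top J (n := 0) hd₁ hd₂
      (ModuleCat.ofHom_mkQ_comp_proj_ne_zero hJ (0 : Fin 4))
  · exact (resolution R).not_subsingleton_ext_quotient_of_d_mem_smul_top J (n := 1) hd₂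
      (fun x => hd₃ ▸ zero_mem _) (ModuleCat.ofHom_mkQ_comp_proj_ne_zero hJ (0 : Fin 3))

end

end MonomialExample

instance {n : ℕ} (L : Finset (Fin n → ℕ)) : Decidable (DominantSet L) :=
  inferInstanceAs (Decidable (∀ v ∈ L, ∃ i : Fin n, ∀ w ∈ L, w ≠ v → w i < v i))

/-- For `I = (a³b², b³c², a²c³, abc)` in `S = K[a,b,c]` (with minimal generating set `G`
given by the corresponding exponent vectors), `L = {a³b², b³c², a²c³}` is a dominant
subset of `G(I)` of maximum cardinality among dominant subsets of `G(I)`, yet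
`projdim (S/I) = 2`. -/
theorem example_dominant_three_but_pd_two (K : Type) [Field K]
    (I : Ideal (MvPolynomial (Fin 3) K))
    (hI : I = Ideal.span {X 0 ^ 3 * X 1 ^ 2, X 1 ^ 3 * X 2 ^ 2, X 0 ^ 2 * X 2 ^ 3,
      X 0 * X 1 * X 2})
    (G L : Finset (Fin 3 → ℕ))
    (hG : G = {![3, 2, 0], ![0, 3, 2], ![2, 0, 3], ![1, 1, 1]})
    (hL : L = {![3, 2, 0], ![0, 3, 2], ![2, 0, 3]}) :
    L ⊆ G ∧ DominantSet L ∧ (∀ L' ⊆ G, DominantSet L' → L'.card ≤ L.card) ∧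
      projDim (MvPolynomial (Fin 3) K)
        (ModuleCat.of (MvPolynomial (Fin 3) K) (MvPolynomial (Fin 3) K ⧸ I)) =
        (2 : ℕ∞) := by
  subst hI
  have hcard : G.card = L.card + 1 := by subst hG hL; decide
  have hG_not_dominant : ¬ DominantSet G := by subst hG; decide
  refine ⟨by subst hG hL; decide, by subst hL; decide, fun L' hsub hdom => ?_,
    MonomialExample.projDim_quotient K⟩
  have := Finset.card_lt_card (hsub.ssubset_of_ne (by rintro rfl; exact hG_not_dominant hdom))
  omega
end

section
/- Suppose L = {u_1,...,u_k} is a dominant subset of G(I) where x_j is a dominant variable for u_j (j = 1,...,k), and suppose that for every w ∈ G(I) \ L there exists t ∈ {1,...,k} with deg_{x_t}(w) ≥ deg_{x_t}(u_t). Then no element of G(I) strongly divides lcm(L). -/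
/-!
Pick `t` with `deg_{x_t}(u_t) ≤ deg_{x_t}(g)`: for `g ∉ L` this is the covering hypothesis, for
`g = u_t` it is trivial. Since `x_t` is dominant for `u_t`, the `x_t`-degree of `lcm L` is that
of `u_t`, so strong divisibility fails at `x_t` unless `deg_{x_t}(g) = 0`. Then also
`deg_{x_t}(u_t) = 0`, and dominance forces `L = {u_t}`, so `g` strongly divides `u_t` and,
being nonzero, lies strictly below it, contradicting minimality of the generating set.
-/

open Finset

def StrongDvd {σ : Type*} (g v : σ → ℕ) : Prop :=
  ∀ a, g a ≠ 0 → g a < v a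

namespace StrongDvd

variable {σ : Type*} {g v : σ → ℕ}

theorem le (h : StrongDvd g v) : g ≤ v := fun a =>
  (eq_or_ne (g a) 0).elim (fun h0 => h0 ▸ Nat.zero_le _) fun h0 => (h a h0).le

theorem lt (h : StrongDvd g v) (hg : g ≠ 0) : g < v := by
  obtain ⟨a, ha⟩ := Function.ne_iff.mp hg
  exact Pi.lt_def.mpr ⟨h.le, a, h a ha⟩

end StrongDvd

section Dominant

variable {ι σ : Type*} {u : ι → σ → ℕ} {x : ι → σ}

theorem sup_apply_of_dominant [Fintype ι] (hdom : ∀ j l, l ≠ j → u l (x j) < u j (x j)) (j : ι) :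
    univ.sup u (x j) = u j (x j) := by
  rw [Finset.sup_apply]
  refine le_antisymm (Finset.sup_le fun l _ => ?_) (le_sup (f := fun l => u l (x j)) (mem_univ j))
  rcases eq_or_ne l j with rfl | hl
  · exact le_rfl
  · exact (hdom j l hl).le

theorem subsingleton_of_dominant_eq_zero (hdom : ∀ j l, l ≠ j → u l (x j) < u j (x j)) {t : ι}
    (ht : u t (x t) = 0) : Subsingleton ι :=
  have hall : ∀ l, l = t := fun l => by_contra fun hl => by simpa [ht] using hdom t l hl
  ⟨fun a b => (hall a).trans (hall b).symm⟩

theorem not_strongDvd_sup_of_dominant [Fintype ι] (hdom : ∀ j l, l ≠ j → u l (x j) < u j (x j))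
    {g : σ → ℕ} (hg : g ≠ 0) (hgu : ∀ j, ¬ g < u j) {t : ι} (ht : u t (x t) ≤ g (x t)) :
    ¬ StrongDvd g (univ.sup u) := by
  intro hs
  by_cases hgt : g (x t) = 0
  · have : Subsingleton ι := subsingleton_of_dominant_eq_zero hdom (t := t) (by omega)
    have hsup : univ.sup u = u t :=
      le_antisymm (Finset.sup_le fun l _ => by rw [Subsingleton.elim l t]) (le_sup (mem_univ t))
    exact hgu t (hsup ▸ hs.lt hg)
  · have := hs (x t) hgt
    rw [sup_apply_of_dominant hdom] at this
    omega

end Dominant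

theorem no_strong_divisor_of_lcm_general {n k : ℕ} (hk : k ≤ n)
    (G : Finset (Fin n → ℕ))
    (hmin : ∀ u ∈ G, ∀ v ∈ G, u ≤ v → u = v)
    (h0 : ∀ g ∈ G, g ≠ 0)
    (u : Fin k → (Fin n → ℕ)) (huG : ∀ j, u j ∈ G)
    (hdom : ∀ j l : Fin k, l ≠ j → u l (Fin.castLE hk j) < u j (Fin.castLE hk j))
    (hcover : ∀ w ∈ G, (∀ j : Fin k, w ≠ u j) →
      ∃ t : Fin k, u t (Fin.castLE hk t) ≤ w (Fin.castLE hk t)) :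
    ∀ g ∈ G, ¬ (∀ a : Fin n, g a ≠ 0 → g a < Finset.univ.sup (fun j : Fin k => u j a)) := by
  intro g hg hs
  obtain ⟨t, ht⟩ : ∃ t : Fin k, u t (Fin.castLE hk t) ≤ g (Fin.castLE hk t) := by
    by_cases hL : ∃ j, g = u j
    · obtain ⟨j, rfl⟩ := hL
      exact ⟨j, le_rfl⟩
    · exact hcover g hg (not_exists.mp hL)
  have hgu : ∀ j, ¬ g < u j := fun j hlt => hlt.ne (hmin g hg (u j) (huG j) hlt.le)
  refine not_strongDvd_sup_of_dominant hdom (h0 g hg) hgu ht fun a ha => ?_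
  simpa only [Finset.sup_apply] using hs a ha

/-- Let `G` be the minimal monomial generating set of a (proper) monomial ideal in
`K[x_1,…,x_n]` (an antichain of nonzero exponent vectors).  Suppose
`L = {u₁,…,u_k} ⊆ G` is a dominant set in which `x_j` is a dominant variable for `u_j`
(`j = 1,…,k ≤ n`), and for every `w ∈ G \ L` there exists `t` with
`deg_{x_t}(w) ≥ deg_{x_t}(u_t)`.  Then no element of `G` strongly divides `lcm L`. -/
theorem no_strong_divisor_of_lcm {n k : ℕ} (hk : k ≤ n)
    (G : Finset (Fin n → ℕ))
    (hmin : ∀ u ∈ G, ∀ v ∈ G, u ≤ v → u = v)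
    (h0 : ∀ g ∈ G, g ≠ 0)
    (u : Fin k → (Fin n → ℕ)) (huinj : Function.Injective u) (huG : ∀ j, u j ∈ G)
    (hdom : ∀ j l : Fin k, l ≠ j → u l (Fin.castLE hk j) < u j (Fin.castLE hk j))
    (hcover : ∀ w ∈ G, (∀ j : Fin k, w ≠ u j) →
      ∃ t : Fin k, u t (Fin.castLE hk t) ≤ w (Fin.castLE hk t)) :
    ∀ g ∈ G, ¬ (∀ a : Fin n, g a ≠ 0 → g a < Finset.univ.sup (fun j : Fin k => u j a)) :=
  no_strong_divisor_of_lcm_general hk G hmin h0 u huG hdom hcover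
end

section
/- The number of dominant monomial ideals in K[x_1,x_2,x_3,x_4] with exactly 4 minimal generators whose lcm is x_1^{m_1} x_2^{m_2} x_3^{m_3} x_4^{m_4} is (m_1 m_2 m_3 m_4)^3. -/
/-!
A dominant set `L` of `n` exponent vectors in `n` variables has pairwise distinct dominant
variables, so listing its elements by dominant variable gives an `n × n` matrix `M` whose row
`i` is the generator dominant in `x_i`. Dominance forces the lcm to be read off the diagonal,
`M i i = m i`, and makes every other entry of column `j` smaller than `m j`; conversely every
such matrix has a dominant set of rows. The off-diagonal entries are free, which gives
`∏ j, m j ^ (n - 1)` sets.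
-/

namespace DominantSet

variable {n : ℕ}

theorem isAntichain {L : Finset (Fin n → ℕ)} (hL : DominantSet L) :
    ∀ u ∈ L, ∀ v ∈ L, u ≤ v → u = v := by
  intro u hu v hv huv
  by_contra hne
  obtain ⟨i, hi⟩ := hL u hu
  exact (hi v hv (Ne.symm hne)).not_ge (huv i)

theorem mLcm_apply_eq {L : Finset (Fin n → ℕ)} {v : Fin n → ℕ} {i : Fin n} (hv : v ∈ L)
    (hdom : ∀ w ∈ L, w ≠ v → w i < v i) : mLcm L i = v i := by
  refine le_antisymm (Finset.sup_le fun w hw => ?_) (Finset.le_sup (f := fun g => g i) hv)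
  rcases eq_or_ne w v with rfl | hne
  · exact le_rfl
  · exact (hdom w hw hne).le

def dominantMatrices (m : Fin n → ℕ) : Finset (Fin n → Fin n → ℕ) :=
  Fintype.piFinset fun i => Fintype.piFinset fun j => if i = j then {m j} else Finset.range (m j)

theorem mem_dominantMatrices {m : Fin n → ℕ} {M : Fin n → Fin n → ℕ} :
    M ∈ dominantMatrices m ↔ (∀ i, M i i = m i) ∧ ∀ i j, i ≠ j → M i j < m j := by
  simp only [dominantMatrices, Fintype.mem_piFinset]
  constructor
  · intro h
    refine ⟨fun i => by simpa using h i i, fun i j hij => by simpa [hij] using h i j⟩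
  · rintro ⟨hdiag, hoff⟩ i j
    by_cases hij : i = j
    · subst hij; simp [hdiag]
    · simpa [hij] using hoff i j hij

theorem card_dominantMatrices (m : Fin n → ℕ) :
    (dominantMatrices m).card = ∏ j, m j ^ (n - 1) := by
  simp only [dominantMatrices, Fintype.card_piFinset, apply_ite Finset.card,
    Finset.card_singleton, Finset.card_range]
  rw [Finset.prod_comm]
  refine Finset.prod_congr rfl fun j _ => ?_
  rw [Finset.prod_ite, Finset.prod_const_one, one_mul, Finset.prod_const, Finset.filter_ne',
    Finset.card_erase_of_mem (Finset.mem_univ j), Finset.card_univ, Fintype.card_fin]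

variable {m : Fin n → ℕ} {M : Fin n → Fin n → ℕ}

theorem lt_diag_of_mem_dominantMatrices (hM : M ∈ dominantMatrices m) {i k : Fin n}
    (hki : k ≠ i) : M k i < M i i := by
  obtain ⟨hdiag, hoff⟩ := mem_dominantMatrices.mp hM
  exact (hdiag i).symm ▸ hoff k i hki

theorem injective_of_mem_dominantMatrices (hM : M ∈ dominantMatrices m) :
    Function.Injective M := by
  intro k i hki
  by_contra hne
  exact (lt_diag_of_mem_dominantMatrices hM hne).ne (congrFun hki i)

def rows (M : Fin n → Fin n → ℕ) : Finset (Fin n → ℕ) := Finset.univ.image M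

@[simp]
theorem mem_rows {v : Fin n → ℕ} : v ∈ rows M ↔ ∃ i, M i = v := by
  simp [rows]

theorem lt_diag_of_mem_rows (hM : M ∈ dominantMatrices m) (i : Fin n) :
    ∀ w ∈ rows M, w ≠ M i → w i < M i i := by
  simp only [mem_rows, forall_exists_index, forall_apply_eq_imp_iff]
  exact fun k hk => lt_diag_of_mem_dominantMatrices hM fun h => hk (h ▸ rfl)

theorem dominantSet_rows (hM : M ∈ dominantMatrices m) : DominantSet (rows M) := by
  intro v hv
  obtain ⟨i, rfl⟩ := mem_rows.mp hv
  exact ⟨i, lt_diag_of_mem_rows hM i⟩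

theorem card_rows (hM : M ∈ dominantMatrices m) : (rows M).card = n := by
  rw [rows, Finset.card_image_of_injective _ (injective_of_mem_dominantMatrices hM),
    Finset.card_univ, Fintype.card_fin]

theorem mLcm_rows (hM : M ∈ dominantMatrices m) : mLcm (rows M) = m := by
  funext i
  rw [mLcm_apply_eq (mem_rows.mpr ⟨i, rfl⟩) (lt_diag_of_mem_rows hM i),
    (mem_dominantMatrices.mp hM).1 i]

theorem injOn_rows : Set.InjOn rows (dominantMatrices m : Set (Fin n → Fin n → ℕ)) := by
  intro M hM M' hM' hrows
  funext i
  obtain ⟨k, hk⟩ := mem_rows.mp (hrows ▸ mem_rows.mpr ⟨i, rfl⟩ : M i ∈ rows M')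
  rcases eq_or_ne k i with rfl | hki
  · exact hk.symm
  · have hdiag : M' i i = M i i := by
      rw [(mem_dominantMatrices.mp hM).1, (mem_dominantMatrices.mp hM').1]
    exact ((lt_diag_of_mem_dominantMatrices hM' hki).ne (by rw [hk, hdiag])).elim

theorem exists_mem_dominantMatrices_rows_eq {L : Finset (Fin n → ℕ)} (hL : DominantSet L)
    (hcard : L.card = n) : ∃ M ∈ dominantMatrices (mLcm L), rows M = L := by
  choose ι hι using fun v : L => hL v.1 v.2
  have hinj : Function.Injective ι := by
    intro v w hvw
    by_contra hne
    have hwv := hι v w.1 w.2 fun h => hne (Subtype.ext h).symm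
    have hvw' := hι w v.1 v.2 fun h => hne (Subtype.ext h)
    rw [hvw] at hwv
    exact lt_asymm hwv hvw'
  have hbij : Function.Bijective ι :=
    (Fintype.bijective_iff_injective_and_card ι).mpr ⟨hinj, by simp [hcard]⟩
  set e := Equiv.ofBijective ι hbij
  set M : Fin n → Fin n → ℕ := fun i => (e.symm i).1
  have hdom (i : Fin n) : ∀ w ∈ L, w ≠ M i → w i < M i i := by
    simpa only [e, Equiv.ofBijective_apply_symm_apply] using hι (e.symm i)
  refine ⟨M, mem_dominantMatrices.mpr ⟨fun i => ?_, fun i j hij => ?_⟩, ?_⟩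
  · exact (mLcm_apply_eq (e.symm i).2 (hdom i)).symm
  · rw [mLcm_apply_eq (e.symm j).2 (hdom j)]
    exact hdom j (M i) (e.symm i).2 fun h => hij (e.symm.injective (Subtype.ext h))
  · ext v
    refine mem_rows.trans ⟨?_, fun hv => ⟨e ⟨v, hv⟩, by simp [M]⟩⟩
    rintro ⟨i, rfl⟩
    exact (e.symm i).2

theorem ncard_setOf_dominantSet_card_eq_mLcm_eq (m : Fin n → ℕ) :
    {L : Finset (Fin n → ℕ) | DominantSet L ∧ L.card = n ∧ mLcm L = m}.ncard =
      ∏ j, m j ^ (n - 1) := by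
  have hrange : {L : Finset (Fin n → ℕ) | DominantSet L ∧ L.card = n ∧ mLcm L = m} =
      ((dominantMatrices m).image rows : Set (Finset (Fin n → ℕ))) := by
    ext L
    simp only [Set.mem_ofPred_eq, Finset.coe_image, Set.mem_image, Finset.mem_coe]
    constructor
    · rintro ⟨hL, hcard, rfl⟩
      exact exists_mem_dominantMatrices_rows_eq hL hcard
    · rintro ⟨M, hM, rfl⟩
      exact ⟨dominantSet_rows hM, card_rows hM, mLcm_rows hM⟩
  rw [hrange, Set.ncard_coe_finset, Finset.card_image_of_injOn injOn_rows, card_dominantMatrices]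

end DominantSet

/-- Monomial ideals are identified with their minimal monomial generating sets (finite
antichains of exponent vectors).  The number of dominant monomial ideals in
`K[x₁,x₂,x₃,x₄]` with exactly 4 minimal generators whose lcm is
`x₁^m₁ x₂^m₂ x₃^m₃ x₄^m₄` is `(m₁ m₂ m₃ m₄)³`. -/
theorem count_dominant_four_vars_four_gens (m : Fin 4 → ℕ) :
    Set.ncard {L : Finset (Fin 4 → ℕ) |
        (∀ u ∈ L, ∀ v ∈ L, u ≤ v → u = v) ∧ DominantSet L ∧ L.card = 4 ∧ mLcm L = m} =
      (m 0 * m 1 * m 2 * m 3) ^ 3 := by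
  have hantichain : {L : Finset (Fin 4 → ℕ) |
      (∀ u ∈ L, ∀ v ∈ L, u ≤ v → u = v) ∧ DominantSet L ∧ L.card = 4 ∧ mLcm L = m} =
      {L | DominantSet L ∧ L.card = 4 ∧ mLcm L = m} :=
    Set.ext fun _ => and_iff_right_of_imp fun h => h.1.isAntichain
  rw [hantichain, DominantSet.ncard_setOf_dominantSet_card_eq_mLcm_eq, Fin.prod_univ_four]
  ring
end
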